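/- arXiv:2105.05372 — 2 statements merged into one kernel-verified Lean document; each statement's English description precedes it below -/
import Mathlib

section
/- (Main theorem) Let C be a measurable spined category with S-functor s. The map Δ : ob C → ℕ defined by Δ(G) = min { s(H) | H pseudo-chordal in C, C(G,H) ≠ ∅ } is itself an S-functor (the triangulation functor), i.e., Δ(Ω_n) = n, Δ is monotone along morphisms, and Δ(𝔓(g,h)) = max(Δ(G), Δ(H)) for every proxy pushout of g : Ω_n → G, h : Ω_n → H; moreover Δ dominates all S-functors: F(X) ≤ Δ(X) for every S-functor F and object X. -/
open CategoryTheory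


/-- A spined category: a category with a spine `Ω : ℕ → C` and a proxy pushout
operation `P`, satisfying SC1 and SC2. -/
structure SpinedStruct (C : Type*) [Category C] where
  Ω : ℕ → C
  P : ∀ {n : ℕ} {G H : C}, (Ω n ⟶ G) → (Ω n ⟶ H) → C
  inl : ∀ {n : ℕ} {G H : C} (g : Ω n ⟶ G) (h : Ω n ⟶ H), G ⟶ P g h
  inr : ∀ {n : ℕ} {G H : C} (g : Ω n ⟶ G) (h : Ω n ⟶ H), H ⟶ P g h
  sc1 : ∀ X : C, ∃ n : ℕ, Nonempty (X ⟶ Ω n)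
  sc2 : ∀ {n : ℕ} {G G' H H' : C} (g : Ω n ⟶ G) (h : Ω n ⟶ H)
      (g' : G ⟶ G') (h' : H ⟶ H'),
      ∃! m : P g h ⟶ P (g ≫ g') (h ≫ h'),
        inl g h ≫ m = g' ≫ inl (g ≫ g') (h ≫ h') ∧
        inr g h ≫ m = h' ≫ inr (g ≫ g') (h ≫ h')

/-- An S-functor on a spined category: a spinal functor to `Nat = (ℕ, ≤)`,
equivalently a monotone-under-morphisms assignment `s : ob C → ℕ` with
`s (Ω n) = n` and `s (P g h) = max (s G) (s H)`. -/
structure SFunctor {C : Type*} [Category C] (S : SpinedStruct C) where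
  s : C → ℕ
  mono : ∀ {X Y : C}, (X ⟶ Y) → s X ≤ s Y
  spine : ∀ n : ℕ, s (S.Ω n) = n
  pp : ∀ {n : ℕ} {G H : C} (g : S.Ω n ⟶ G) (h : S.Ω n ⟶ H),
      s (S.P g h) = max (s G) (s H)

/-- An object is pseudo-chordal if all S-functors agree on it. -/
def PseudoChordal {C : Type*} [Category C] (S : SpinedStruct C) (X : C) : Prop :=
  ∀ F G : SFunctor S, F.s X = G.s X

/-- The triangulation map `Δ(G) = min { s(H) | H pseudo-chordal, C(G,H) ≠ ∅ }`. -/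
noncomputable def Delta {C : Type*} [Category C] (S : SpinedStruct C)
    (s : SFunctor S) (G : C) : ℕ :=
  sInf { k | ∃ H : C, PseudoChordal S H ∧ Nonempty (G ⟶ H) ∧ s.s H = k }

lemma pc_spine {C : Type*} [Category C] (S : SpinedStruct C) (n : ℕ) :
    PseudoChordal S (S.Ω n) := fun F G => by rw [F.spine, G.spine]

lemma pc_pp {C : Type*} [Category C] (S : SpinedStruct C) {n : ℕ} {G H : C}
    (g : S.Ω n ⟶ G) (h : S.Ω n ⟶ H) (hG : PseudoChordal S G) (hH : PseudoChordal S H) :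
    PseudoChordal S (S.P g h) := fun F F' => by
  rw [F.pp, F'.pp, hG F F', hH F F']

lemma delta_mem {C : Type*} [Category C] {S : SpinedStruct C} (s : SFunctor S) (X : C) :
    Delta S s X ∈ { k | ∃ H : C, PseudoChordal S H ∧ Nonempty (X ⟶ H) ∧ s.s H = k } := by
  apply Nat.sInf_mem
  obtain ⟨n, hn⟩ := S.sc1 X
  exact ⟨n, S.Ω n, pc_spine S n, hn, s.spine n⟩

lemma delta_dominates {C : Type*} [Category C] {S : SpinedStruct C} (s : SFunctor S)
    (F : SFunctor S) (X : C) : F.s X ≤ Delta S s X := by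
  obtain ⟨H, hpc, ⟨f⟩, hk⟩ := delta_mem s X
  calc F.s X ≤ F.s H := F.mono f
    _ = s.s H := hpc F s
    _ = Delta S s X := hk

lemma delta_mono {C : Type*} [Category C] {S : SpinedStruct C} (s : SFunctor S)
    {X Y : C} (f : X ⟶ Y) : Delta S s X ≤ Delta S s Y := by
  obtain ⟨H, hpc, ⟨g⟩, hk⟩ := delta_mem s Y
  exact hk ▸ Nat.sInf_le ⟨H, hpc, ⟨f ≫ g⟩, rfl⟩

/-- Main theorem: `Δ` is an S-functor (the triangulation functor) and dominates
all S-functors. -/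
theorem triangulation_functor {C : Type*} [Category C] {S : SpinedStruct C}
    (s : SFunctor S) :
    (∀ n : ℕ, Delta S s (S.Ω n) = n) ∧
    (∀ {X Y : C}, (X ⟶ Y) → Delta S s X ≤ Delta S s Y) ∧
    (∀ {n : ℕ} {G H : C} (g : S.Ω n ⟶ G) (h : S.Ω n ⟶ H),
      Delta S s (S.P g h) = max (Delta S s G) (Delta S s H)) ∧
    (∀ (F : SFunctor S) (X : C), F.s X ≤ Delta S s X) := by
  refine ⟨fun n => ?_, fun f => delta_mono s f, fun {n G H} g h => ?_, delta_dominates s⟩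
  · exact le_antisymm (Nat.sInf_le ⟨S.Ω n, pc_spine S n, ⟨𝟙 _⟩, s.spine n⟩)
      (by have := delta_dominates s s (S.Ω n); rwa [s.spine] at this)
  · apply le_antisymm
    · obtain ⟨KG, pcG, ⟨g'⟩, hkG⟩ := delta_mem s G
      obtain ⟨KH, pcH, ⟨h'⟩, hkH⟩ := delta_mem s H
      obtain ⟨m, _, _⟩ := S.sc2 g h g' h'
      have : s.s (S.P (g ≫ g') (h ≫ h')) = max (Delta S s G) (Delta S s H) := by
        rw [s.pp, hkG, hkH]
      exact this ▸ Nat.sInf_le ⟨S.P (g ≫ g') (h ≫ h'), pc_pp S _ _ pcG pcH, ⟨m⟩, rfl⟩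
    · exact max_le (delta_mono s (S.inl g h)) (delta_mono s (S.inr g h))
end

section
/- If F : C → D is a spinal functor between measurable spined categories with triangulation functors Δ_C and Δ_D, then for every object X of C, Δ_D(F X) ≤ Δ_C(X). -/
open CategoryTheory


/-- A spinal functor between spined categories: preserves the spine and
proxy pushouts. -/
structure IsSpinal {C D : Type*} [Category C] [Category D]
    (SC : SpinedStruct C) (SD : SpinedStruct D) (F : C ⥤ D) : Prop where
  spine : ∀ n : ℕ, F.obj (SC.Ω n) = SD.Ω n
  pObj : ∀ {n : ℕ} {G H : C} (g : SC.Ω n ⟶ G) (h : SC.Ω n ⟶ H),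
    F.obj (SC.P g h) =
      SD.P (eqToHom (spine n).symm ≫ F.map g) (eqToHom (spine n).symm ≫ F.map h)
  pInl : ∀ {n : ℕ} {G H : C} (g : SC.Ω n ⟶ G) (h : SC.Ω n ⟶ H),
    F.map (SC.inl g h) =
      SD.inl (eqToHom (spine n).symm ≫ F.map g) (eqToHom (spine n).symm ≫ F.map h) ≫
        eqToHom (pObj g h).symm
  pInr : ∀ {n : ℕ} {G H : C} (g : SC.Ω n ⟶ G) (h : SC.Ω n ⟶ H),
    F.map (SC.inr g h) =
      SD.inr (eqToHom (spine n).symm ≫ F.map g) (eqToHom (spine n).symm ≫ F.map h) ≫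
        eqToHom (pObj g h).symm

lemma delta_set_nonempty {C : Type*} [Category C] (S : SpinedStruct C) (s : SFunctor S)
    (X : C) :
    {k | ∃ H : C, PseudoChordal S H ∧ Nonempty (X ⟶ H) ∧ s.s H = k}.Nonempty := by
  obtain ⟨n, ⟨f⟩⟩ := S.sc1 X
  exact ⟨s.s (S.Ω n), S.Ω n, pc_spine S n, ⟨f⟩, rfl⟩

lemma sfunctor_le_delta {C : Type*} [Category C] {S : SpinedStruct C}
    (s t : SFunctor S) (X : C) : t.s X ≤ Delta S s X := by
  obtain ⟨H, hH, ⟨f⟩, hv⟩ := Nat.sInf_mem (delta_set_nonempty S s X)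
  calc t.s X ≤ t.s H := t.mono f
    _ = s.s H := hH t s
    _ = Delta S s X := hv

lemma delta_spine {C : Type*} [Category C] {S : SpinedStruct C} (s : SFunctor S)
    (n : ℕ) : Delta S s (S.Ω n) = n := by
  apply le_antisymm
  · exact Nat.sInf_le ⟨S.Ω n, pc_spine S n, ⟨𝟙 _⟩, s.spine n⟩
  · apply le_csInf (delta_set_nonempty S s _)
    rintro k ⟨H, hH, ⟨f⟩, hv⟩
    calc n = s.s (S.Ω n) := (s.spine n).symm
      _ ≤ s.s H := s.mono f
      _ = k := hv

lemma delta_pp {C : Type*} [Category C] {S : SpinedStruct C} (s : SFunctor S)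
    {n : ℕ} {G H : C} (g : S.Ω n ⟶ G) (h : S.Ω n ⟶ H) :
    Delta S s (S.P g h) = max (Delta S s G) (Delta S s H) := by
  apply le_antisymm
  · obtain ⟨K, hK, ⟨k⟩, hk⟩ := Nat.sInf_mem (delta_set_nonempty S s G)
    obtain ⟨L, hL, ⟨l⟩, hl⟩ := Nat.sInf_mem (delta_set_nonempty S s H)
    obtain ⟨m, hm, -⟩ := S.sc2 g h k l
    refine le_trans (Nat.sInf_le ⟨S.P (g ≫ k) (h ≫ l), ?_, ⟨m⟩, rfl⟩) ?_
    · intro t u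
      rw [t.pp (g ≫ k) (h ≫ l), u.pp (g ≫ k) (h ≫ l), hK t u, hL t u]
    · rw [s.pp (g ≫ k) (h ≫ l), hk, hl]
      exact le_rfl
  · exact max_le (delta_mono s (S.inl g h)) (delta_mono s (S.inr g h))

/-- `Delta` is itself an S-functor. -/
noncomputable def deltaSFunctor {C : Type*} [Category C] (S : SpinedStruct C)
    (s : SFunctor S) : SFunctor S where
  s := Delta S s
  mono := delta_mono s
  spine := delta_spine s
  pp := delta_pp s

/-- Composition of an S-functor with a spinal functor. -/
def compSFunctor {C D : Type*} [Category C] [Category D]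
    {SC : SpinedStruct C} {SD : SpinedStruct D} {F : C ⥤ D}
    (hF : IsSpinal SC SD F) (t : SFunctor SD) : SFunctor SC where
  s X := t.s (F.obj X)
  mono f := t.mono (F.map f)
  spine n := by show t.s (F.obj (SC.Ω n)) = n; rw [hF.spine n, t.spine]
  pp {n G H} g h := by
    show t.s (F.obj (SC.P g h)) = max (t.s (F.obj G)) (t.s (F.obj H))
    rw [hF.pObj g h, t.pp]

/-- For a spinal functor `F` between measurable spined categories,
`Δ_D (F X) ≤ Δ_C X`. -/
theorem delta_le_of_spinal {C D : Type*} [Category C] [Category D]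
    {SC : SpinedStruct C} {SD : SpinedStruct D} {F : C ⥤ D}
    (hF : IsSpinal SC SD F) (sC : SFunctor SC) (sD : SFunctor SD) (X : C) :
    Delta SD sD (F.obj X) ≤ Delta SC sC X := by
  exact sfunctor_le_delta sC (compSFunctor hF (deltaSFunctor SD sD)) X
end
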